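/- arXiv:2508.05111 — 2 statements merged into one kernel-verified Lean document; each statement's English description precedes it below -/
import Mathlib

section
/- Let ι be a nonempty finite index set, and let a : ι → ℝ and b : ι → ℝ be functions with a(τ) > 0 and b(τ) > 0 for all τ. Define |M| = ∑_τ a(τ), A = ∑_τ b(τ), E_S = ∑_τ b(τ)²/a(τ), and E = (|M|/A)·E_S − A. Then E ≥ 0, and E = 0 if and only if the ratio b(τ)/a(τ) is the same for all τ ∈ ι (i.e., there exists a constant c such that b(τ) = c·a(τ) for all τ). -/
/-- Discrete core of Theorem 1 (Liu–Yueh): the objective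
`E = (|M|/A)·E_S − A` with `|M| = ∑ a τ`, `A = ∑ b τ`, `E_S = ∑ (b τ)²/(a τ)`
is nonnegative, and vanishes iff `b` is a constant multiple of `a`. -/
theorem stmt_0 {ι : Type*} [Fintype ι] [Nonempty ι] (a b : ι → ℝ)
    (ha : ∀ τ, 0 < a τ) (hb : ∀ τ, 0 < b τ) :
    0 ≤ ((∑ τ, a τ) / (∑ τ, b τ)) * (∑ τ, (b τ) ^ 2 / a τ) - (∑ τ, b τ) ∧
      (((∑ τ, a τ) / (∑ τ, b τ)) * (∑ τ, (b τ) ^ 2 / a τ) - (∑ τ, b τ) = 0 ↔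
        ∃ c : ℝ, ∀ τ, b τ = c * a τ) := by
  set S := ∑ τ, a τ with hS
  set A := ∑ τ, b τ with hA
  have hS0 : 0 < S := Finset.sum_pos (fun τ _ => ha τ) Finset.univ_nonempty
  have hA0 : 0 < A := Finset.sum_pos (fun τ _ => hb τ) Finset.univ_nonempty
  have key : ∑ τ, a τ * (b τ / a τ - A / S) ^ 2
      = (∑ τ, (b τ) ^ 2 / a τ) - 2 * (A / S) * A + (A / S) ^ 2 * S := by
    have h1 : ∀ τ : ι, a τ * (b τ / a τ - A / S) ^ 2
        = (b τ) ^ 2 / a τ - 2 * (A / S) * b τ + (A / S) ^ 2 * a τ := by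
      intro τ
      have haτ := (ha τ).ne'
      field_simp
      ring
    rw [Finset.sum_congr rfl fun τ _ => h1 τ]
    rw [Finset.sum_add_distrib, Finset.sum_sub_distrib, ← Finset.mul_sum, ← Finset.mul_sum]
  have hsimp : (∑ τ, (b τ) ^ 2 / a τ) - 2 * (A / S) * A + (A / S) ^ 2 * S
      = (∑ τ, (b τ) ^ 2 / a τ) - A ^ 2 / S := by
    field_simp
    ring
  have hE : S / A * (∑ τ, (b τ) ^ 2 / a τ) - A
      = (S / A) * ∑ τ, a τ * (b τ / a τ - A / S) ^ 2 := by
    rw [key, hsimp]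
    field_simp
  have hterm : ∀ τ ∈ Finset.univ, 0 ≤ a τ * (b τ / a τ - A / S) ^ 2 := by
    intro τ _
    exact mul_nonneg (ha τ).le (sq_nonneg _)
  have hsumnn : 0 ≤ ∑ τ, a τ * (b τ / a τ - A / S) ^ 2 := Finset.sum_nonneg hterm
  constructor
  · rw [hE]
    exact mul_nonneg (div_pos hS0 hA0).le hsumnn
  · rw [hE]
    constructor
    · intro h
      have hsum0 : ∑ τ, a τ * (b τ / a τ - A / S) ^ 2 = 0 := by
        have := mul_eq_zero.mp h
        rcases this with h' | h'
        · exact absurd h' (div_pos hS0 hA0).ne'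
        · exact h'
      refine ⟨A / S, fun τ => ?_⟩
      have := (Finset.sum_eq_zero_iff_of_nonneg hterm).mp hsum0 τ (Finset.mem_univ τ)
      have h2 : (b τ / a τ - A / S) ^ 2 = 0 := by
        rcases mul_eq_zero.mp this with h' | h'
        · exact absurd h' (ha τ).ne'
        · exact h'
      have h3 : b τ / a τ = A / S := by
        have := pow_eq_zero_iff (n := 2) (by norm_num) |>.mp h2
        linarith
      exact (div_eq_iff (ha τ).ne').mp h3
    · rintro ⟨c, hc⟩
      have hAcS : A = c * S := by
        rw [hA, hS, Finset.mul_sum]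
        exact Finset.sum_congr rfl fun τ _ => hc τ
      have hc' : A / S = c := by
        rw [hAcS]; field_simp
      have : ∀ τ ∈ Finset.univ, a τ * (b τ / a τ - A / S) ^ 2 = 0 := by
        intro τ _
        rw [hc', hc τ, mul_div_assoc, div_self (ha τ).ne', mul_one, sub_self]
        ring
      rw [Finset.sum_eq_zero this, mul_zero]
end

section
/- Let 0 < r < R and let q = (q₁, q₂, q₃) ∈ ℝ³ satisfy q₁² + q₂² > 0 and c² + q₃² > 0, where c = √(q₁² + q₂²) − R. Let Π(q) = ((R + r·cos φ_q)·cos θ_q, (R + r·cos φ_q)·sin θ_q, r·sin φ_q) with cos θ_q = q₁/√(q₁² + q₂²), sin θ_q = q₂/√(q₁² + q₂²), cos φ_q = c/√(c² + q₃²), sin φ_q = q₃/√(c² + q₃²). Then for every point p ∈ ℝ³ on the ring torus, i.e., with (√(p₁² + p₂²) − R)² + p₃² = r², one has ‖q − Π(q)‖ ≤ ‖q − p‖, where ‖·‖ is the Euclidean norm. In other words, Π(q) is a nearest point to q on the torus. -/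
/-- Two-dimensional Cauchy–Schwarz with square roots. -/
lemma cs2 (a b x y : ℝ) :
    a * x + b * y ≤ Real.sqrt (a ^ 2 + b ^ 2) * Real.sqrt (x ^ 2 + y ^ 2) := by
  have h1 : Real.sqrt (a ^ 2 + b ^ 2) ^ 2 = a ^ 2 + b ^ 2 :=
    Real.sq_sqrt (by positivity)
  have h2 : Real.sqrt (x ^ 2 + y ^ 2) ^ 2 = x ^ 2 + y ^ 2 :=
    Real.sq_sqrt (by positivity)
  nlinarith [sq_nonneg (a * y - b * x), Real.sqrt_nonneg (a ^ 2 + b ^ 2),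
    Real.sqrt_nonneg (x ^ 2 + y ^ 2),
    mul_nonneg (Real.sqrt_nonneg (a ^ 2 + b ^ 2)) (Real.sqrt_nonneg (x ^ 2 + y ^ 2)),
    sq_nonneg (Real.sqrt (a ^ 2 + b ^ 2) * Real.sqrt (x ^ 2 + y ^ 2) - (a * x + b * y))]

/-- `Π(q)` (Algorithm 2) is a nearest point to `q` on the ring torus:
for every point `p` on the torus, `‖q − Π(q)‖ ≤ ‖q − p‖`. -/
theorem stmt_5 (R r : ℝ) (hr : 0 < r) (hrR : r < R) (q1 q2 q3 : ℝ)
    (h1 : 0 < q1 ^ 2 + q2 ^ 2)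
    (c : ℝ) (hc : c = Real.sqrt (q1 ^ 2 + q2 ^ 2) - R)
    (h2 : 0 < c ^ 2 + q3 ^ 2)
    (cosθ sinθ cosφ sinφ : ℝ)
    (hct : cosθ = q1 / Real.sqrt (q1 ^ 2 + q2 ^ 2))
    (hst : sinθ = q2 / Real.sqrt (q1 ^ 2 + q2 ^ 2))
    (hcp : cosφ = c / Real.sqrt (c ^ 2 + q3 ^ 2))
    (hsp : sinφ = q3 / Real.sqrt (c ^ 2 + q3 ^ 2))
    (p1 p2 p3 : ℝ)
    (hp : (Real.sqrt (p1 ^ 2 + p2 ^ 2) - R) ^ 2 + p3 ^ 2 = r ^ 2) :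
    Real.sqrt ((q1 - (R + r * cosφ) * cosθ) ^ 2 + (q2 - (R + r * cosφ) * sinθ) ^ 2 +
        (q3 - r * sinφ) ^ 2) ≤
      Real.sqrt ((q1 - p1) ^ 2 + (q2 - p2) ^ 2 + (q3 - p3) ^ 2) := by
  set ρ := Real.sqrt (q1 ^ 2 + q2 ^ 2) with hρdef
  set s := Real.sqrt (c ^ 2 + q3 ^ 2) with hsdef
  set ρp := Real.sqrt (p1 ^ 2 + p2 ^ 2) with hρpdef
  have hρ2 : ρ ^ 2 = q1 ^ 2 + q2 ^ 2 := Real.sq_sqrt h1.le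
  have hs2 : s ^ 2 = c ^ 2 + q3 ^ 2 := Real.sq_sqrt h2.le
  have hρp2 : ρp ^ 2 = p1 ^ 2 + p2 ^ 2 := Real.sq_sqrt (by positivity)
  have hρpos : 0 < ρ := Real.sqrt_pos.mpr h1
  have hspos : 0 < s := Real.sqrt_pos.mpr h2
  have hρpnn : 0 ≤ ρp := Real.sqrt_nonneg _
  clear_value ρ s ρp
  apply Real.sqrt_le_sqrt
  -- LHS expression equals (s - r)^2
  have hkey : (q1 - (R + r * cosφ) * cosθ) ^ 2 + (q2 - (R + r * cosφ) * sinθ) ^ 2 +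
      (q3 - r * sinφ) ^ 2 = (s - r) ^ 2 := by
    subst hct hst hcp hsp hc
    field_simp
    linear_combination (-(s - r) ^ 2 * (ρ - R) ^ 2) * hρ2 +
      (-(s - r) ^ 2 * ρ ^ 2) * hs2
  rw [hkey]
  -- Cauchy–Schwarz steps
  have hA : q1 * p1 + q2 * p2 ≤ ρ * ρp := by
    have := cs2 q1 q2 p1 p2
    rwa [← hρdef, ← hρpdef] at this
  have hB : c * (ρp - R) + q3 * p3 ≤ s * r := by
    have := cs2 c q3 (ρp - R) p3
    rwa [← hsdef, show Real.sqrt ((ρp - R) ^ 2 + p3 ^ 2) = r by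
      rw [hp]; exact Real.sqrt_sq hr.le] at this
  have e1 : (ρ - ρp) ^ 2 + (q3 - p3) ^ 2 - (s - r) ^ 2 =
      2 * (s * r - (c * (ρp - R) + q3 * p3)) := by
    rw [show ρ = c + R by linarith [hc]]
    linear_combination hp - hs2
  have e2 : (q1 - p1) ^ 2 + (q2 - p2) ^ 2 - ((ρ - ρp) ^ 2) =
      2 * (ρ * ρp - (q1 * p1 + q2 * p2)) := by
    linear_combination -hρ2 - hρp2
  linarith [hA, hB, e1, e2]
end
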